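/- arXiv:2001.07889 — 5 statements merged into one kernel-verified Lean document; each statement's English description precedes it below -/
import Mathlib

section
/- Let C, C' be cost matrices and V, V' ∈ ℝ^S. Then ‖f_C(V) − f_{C'}(V')‖∞ ≤ S · ‖(C − C')ᵀ‖∞ + γ · ‖V − V'‖∞, where ‖(C − C')ᵀ‖∞ = max_{a ∈ Fin A} ∑_{s ∈ Fin S} |C s a − C' s a| is the maximum absolute row sum of the transposed difference matrix. -/
/-! The minimum over a finite set of actions is 1-Lipschitz in the sup norm, so it suffices to
compare the two Q-values `C s a + γ ∑ P s' s a V s'` action by action: the costs differ by at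
most one column sum of `|C - C'|`, and the expectations of `V` and `V'` under the probability
vector `P · s a` differ by at most `‖V - V'‖`. -/

open Metric

/-- The Bellman operator for a discounted MDP with transition kernel `P`,
discount factor `γ` and cost matrix `C`. -/
noncomputable def bellman (S A : ℕ) (P : Fin S → Fin S → Fin A → ℝ) (γ : ℝ)
    (C : Fin S → Fin A → ℝ) (V : Fin S → ℝ) : Fin S → ℝ :=
  fun s => ⨅ a : Fin A, (C s a + γ * ∑ s' : Fin S, P s' s a * V s')

lemma ciInf_le_ciInf_add {ι : Type*} [Finite ι] [Nonempty ι] {x y : ι → ℝ} {b : ℝ}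
    (h : ∀ i, x i ≤ y i + b) : ⨅ i, x i ≤ (⨅ i, y i) + b := by
  rw [← sub_le_iff_le_add]
  exact le_ciInf fun i =>
    sub_le_iff_le_add.2 ((ciInf_le (Set.finite_range x).bddBelow i).trans (h i))

lemma abs_ciInf_sub_ciInf_le {ι : Type*} [Finite ι] [Nonempty ι] {x y : ι → ℝ} {b : ℝ}
    (h : ∀ i, |x i - y i| ≤ b) : |(⨅ i, x i) - ⨅ i, y i| ≤ b := by
  rw [abs_sub_le_iff, sub_le_iff_le_add', sub_le_iff_le_add']
  refine ⟨ciInf_le_ciInf_add fun i => ?_, ciInf_le_ciInf_add fun i => ?_⟩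
  · linarith [le_abs_self (x i - y i), h i]
  · linarith [neg_abs_le (x i - y i), h i]

lemma abs_sum_mul_le_norm {ι : Type*} [Fintype ι] {w : ι → ℝ} (hw0 : ∀ i, 0 ≤ w i)
    (hw1 : ∑ i, w i = 1) (f : ι → ℝ) : |∑ i, w i * f i| ≤ ‖f‖ :=
  calc |∑ i, w i * f i| ≤ ∑ i, |w i * f i| := Finset.abs_sum_le_sum_abs _ _
    _ ≤ ∑ i, w i * ‖f‖ := Finset.sum_le_sum fun i _ => by
        rw [abs_mul, abs_of_nonneg (hw0 i), ← Real.norm_eq_abs]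
        exact mul_le_mul_of_nonneg_left (norm_le_pi_norm f i) (hw0 i)
    _ = ‖f‖ := by rw [← Finset.sum_mul, hw1, one_mul]

lemma abs_le_iSup_sum_abs {ι κ : Type*} [Fintype ι] [Finite κ] (f : ι → κ → ℝ) (i : ι) (k : κ) :
    |f i k| ≤ ⨆ k, ∑ i, |f i k| :=
  (Finset.single_le_sum (fun j _ => abs_nonneg (f j k)) (Finset.mem_univ i)).trans
    (le_ciSup (f := fun k => ∑ i, |f i k|) (Set.finite_range _).bddAbove k)

lemma abs_bellman_sub_bellman_le {S A : ℕ} (hA : 0 < A) {P : Fin S → Fin S → Fin A → ℝ}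
    (hP0 : ∀ s' s a, 0 ≤ P s' s a) (hP1 : ∀ s a, ∑ s' : Fin S, P s' s a = 1)
    {γ : ℝ} (hγ : 0 ≤ γ) (C C' : Fin S → Fin A → ℝ) (V V' : Fin S → ℝ) (s : Fin S) :
    |bellman S A P γ C V s - bellman S A P γ C' V' s| ≤
      (⨆ a : Fin A, ∑ s : Fin S, |C s a - C' s a|) + γ * ‖V - V'‖ := by
  have : Nonempty (Fin A) := ⟨⟨0, hA⟩⟩
  refine abs_ciInf_sub_ciInf_le fun a => ?_
  have hQ : (C s a + γ * ∑ s', P s' s a * V s') - (C' s a + γ * ∑ s', P s' s a * V' s') =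
      (C s a - C' s a) + γ * ∑ s', P s' s a * (V - V') s' := by
    simp only [Pi.sub_apply, mul_sub, Finset.sum_sub_distrib]
    ring
  have hcost := abs_le_iSup_sum_abs (fun s a => C s a - C' s a) s a
  have hnext := abs_sum_mul_le_norm (hP0 · s a) (hP1 s a) (V - V')
  calc _ = |(C s a - C' s a) + γ * ∑ s', P s' s a * (V - V') s'| := by rw [hQ]
    _ ≤ |C s a - C' s a| + γ * |∑ s', P s' s a * (V - V') s'| := by
        rw [← abs_of_nonneg hγ, ← abs_mul, abs_of_nonneg hγ]
        exact abs_add_le _ _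
    _ ≤ _ := add_le_add hcost (mul_le_mul_of_nonneg_left hnext hγ)

theorem bellman_lipschitz_bound_general (S A : ℕ) (hA : 0 < A)
    (P : Fin S → Fin S → Fin A → ℝ)
    (hP0 : ∀ s' s a, 0 ≤ P s' s a)
    (hP1 : ∀ s a, ∑ s' : Fin S, P s' s a = 1)
    (γ : ℝ) (hγ : γ ∈ Set.Ioo (0 : ℝ) 1)
    (C C' : Fin S → Fin A → ℝ) (V V' : Fin S → ℝ) :
    ‖bellman S A P γ C V - bellman S A P γ C' V'‖ ≤
      (S : ℝ) * (⨆ a : Fin A, ∑ s : Fin S, |C s a - C' s a|) + γ * ‖V - V'‖ := by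
  set M := ⨆ a : Fin A, ∑ s : Fin S, |C s a - C' s a|
  have hM : 0 ≤ M := Real.iSup_nonneg fun a => Finset.sum_nonneg fun s _ => abs_nonneg _
  have hγ0 : 0 ≤ γ := hγ.1.le
  refine (pi_norm_le_iff_of_nonneg (by positivity)).2 fun s => ?_
  have hS : (1 : ℝ) ≤ S := by exact_mod_cast s.pos
  calc _ = |bellman S A P γ C V s - bellman S A P γ C' V' s| := Real.norm_eq_abs _
    _ ≤ M + γ * ‖V - V'‖ := abs_bellman_sub_bellman_le hA hP0 hP1 hγ0 C C' V V' s
    _ ≤ S * M + γ * ‖V - V'‖ := by gcongr; exact le_mul_of_one_le_left hM hS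

theorem bellman_lipschitz_bound (S A : ℕ) (hS : 0 < S) (hA : 0 < A)
    (P : Fin S → Fin S → Fin A → ℝ)
    (hP0 : ∀ s' s a, 0 ≤ P s' s a)
    (hP1 : ∀ s a, ∑ s' : Fin S, P s' s a = 1)
    (γ : ℝ) (hγ : γ ∈ Set.Ioo (0 : ℝ) 1)
    (C C' : Fin S → Fin A → ℝ) (V V' : Fin S → ℝ) :
    ‖bellman S A P γ C V - bellman S A P γ C' V'‖ ≤
      (S : ℝ) * (⨆ a : Fin A, ∑ s : Fin S, |C s a - C' s a|) + γ * ‖V - V'‖ :=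
  bellman_lipschitz_bound_general S A hA P hP0 hP1 γ hγ C C' V V'
end

section
/- (Proposition 4) If 𝒞 is a nonempty compact set of cost matrices and 𝒱 is a nonempty compact subset of ℝ^S, then F_𝒞(𝒱) = closure(⋃_{C ∈ 𝒞, V ∈ 𝒱} {f_C V}) is a nonempty compact subset of ℝ^S. -/
/-! The map `(C, V) ↦ f_C V` is jointly continuous, each coordinate being a finite minimum of
functions affine in `(C, V)`. Hence the union is the continuous image of the compact set `𝒞 × 𝒱`;
it is compact, so already closed, and taking the closure changes nothing. -/

open Metric

/-- The set-based Bellman operator associated with a set `𝒞` of cost matrices. -/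
noncomputable def setBellman (S A : ℕ) (P : Fin S → Fin S → Fin A → ℝ) (γ : ℝ)
    (𝒞 : Set (Fin S → Fin A → ℝ)) (𝒱 : Set (Fin S → ℝ)) : Set (Fin S → ℝ) :=
  closure (⋃ C ∈ 𝒞, ⋃ V ∈ 𝒱, {bellman S A P γ C V})

theorem Continuous.iInf_of_finite {ι X L : Type*} [Finite ι] [TopologicalSpace X]
    [ConditionallyCompleteLattice L] [TopologicalSpace L] [ContinuousInf L]
    {f : ι → X → L} (hf : ∀ i, Continuous (f i)) : Continuous fun x ↦ ⨅ i, f i x := by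
  rcases isEmpty_or_nonempty ι with hι | hι
  · simp only [iInf_of_isEmpty]
    exact continuous_const
  · have := Fintype.ofFinite ι
    simpa only [Finset.inf'_univ_eq_ciInf] using
      Continuous.finset_inf'_apply Finset.univ_nonempty fun i _ ↦ hf i

theorem IsCompact.image2 {α β γ : Type*} [TopologicalSpace α] [TopologicalSpace β]
    [TopologicalSpace γ] {f : α → β → γ} {s : Set α} {t : Set β}
    (hs : IsCompact s) (ht : IsCompact t) (hf : Continuous (Function.uncurry f)) :
    IsCompact (Set.image2 f s t) :=
  Set.image_prod f ▸ (hs.prod ht).image hf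

theorem continuous_uncurry_bellman (S A : ℕ) (P : Fin S → Fin S → Fin A → ℝ) (γ : ℝ) :
    Continuous (Function.uncurry (bellman S A P γ)) :=
  continuous_pi fun s ↦ Continuous.iInf_of_finite fun a ↦
    show Continuous fun p : (Fin S → Fin A → ℝ) × (Fin S → ℝ) ↦
      p.1 s a + γ * ∑ s', P s' s a * p.2 s' by fun_prop

theorem setBellman_eq_image2 (S A : ℕ) (P : Fin S → Fin S → Fin A → ℝ) (γ : ℝ)
    {𝒞 : Set (Fin S → Fin A → ℝ)} (h𝒞c : IsCompact 𝒞) {𝒱 : Set (Fin S → ℝ)}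
    (h𝒱c : IsCompact 𝒱) :
    setBellman S A P γ 𝒞 𝒱 = Set.image2 (bellman S A P γ) 𝒞 𝒱 := by
  rw [setBellman, ← Set.image2_eq_iUnion,
    (h𝒞c.image2 h𝒱c (continuous_uncurry_bellman S A P γ)).isClosed.closure_eq]

theorem setBellman_nonempty_compact_general (S A : ℕ)
    (P : Fin S → Fin S → Fin A → ℝ)
    (γ : ℝ)
    (𝒞 : Set (Fin S → Fin A → ℝ)) (h𝒞ne : 𝒞.Nonempty) (h𝒞c : IsCompact 𝒞)
    (𝒱 : Set (Fin S → ℝ)) (h𝒱ne : 𝒱.Nonempty) (h𝒱c : IsCompact 𝒱) :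
    (setBellman S A P γ 𝒞 𝒱).Nonempty ∧ IsCompact (setBellman S A P γ 𝒞 𝒱) := by
  rw [setBellman_eq_image2 S A P γ h𝒞c h𝒱c]
  exact ⟨h𝒞ne.image2 h𝒱ne, h𝒞c.image2 h𝒱c (continuous_uncurry_bellman S A P γ)⟩

theorem setBellman_nonempty_compact (S A : ℕ) (hS : 0 < S) (hA : 0 < A)
    (P : Fin S → Fin S → Fin A → ℝ)
    (hP0 : ∀ s' s a, 0 ≤ P s' s a)
    (hP1 : ∀ s a, ∑ s' : Fin S, P s' s a = 1)
    (γ : ℝ) (hγ : γ ∈ Set.Ioo (0 : ℝ) 1)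
    (𝒞 : Set (Fin S → Fin A → ℝ)) (h𝒞ne : 𝒞.Nonempty) (h𝒞c : IsCompact 𝒞)
    (𝒱 : Set (Fin S → ℝ)) (h𝒱ne : 𝒱.Nonempty) (h𝒱c : IsCompact 𝒱) :
    (setBellman S A P γ 𝒞 𝒱).Nonempty ∧ IsCompact (setBellman S A P γ 𝒞 𝒱) :=
  setBellman_nonempty_compact_general S A P γ 𝒞 h𝒞ne h𝒞c 𝒱 h𝒱ne h𝒱c
end

section
/- (Proposition 5, contraction) Let 𝒞 be a nonempty compact set of cost matrices and let 𝒱, 𝒱' be nonempty compact subsets of ℝ^S. Then the Hausdorff distance satisfies d_H(F_𝒞(𝒱), F_𝒞(𝒱')) ≤ γ · d_H(𝒱, 𝒱'). -/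
open Metric

open scoped NNReal ENNReal

/-!
Each `bellman S A P γ C` is a `γ`-contraction for the sup norm: every action value
`V ↦ C s a + γ * ∑ s', P s' s a * V s'` is, because `P · s a` is a probability vector, and a
minimum over finitely many actions preserves the Lipschitz constant. Applying a family of
`K`-Lipschitz maps to two sets multiplies their Hausdorff distance by at most `K`, and taking
closures does not change it.
-/

theorem LipschitzWith.ciInf {ι α : Type*} [PseudoMetricSpace α] [Finite ι] [Nonempty ι]
    {K : ℝ≥0} {f : ι → α → ℝ} (hf : ∀ i, LipschitzWith K (f i)) :
    LipschitzWith K fun x => ⨅ i, f i x :=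
  LipschitzWith.of_le_add_mul K fun x y =>
    sub_le_iff_le_add.1 <| le_ciInf fun i => sub_le_iff_le_add.2 <|
      (ciInf_le (Finite.bddBelow_range _) i).trans ((hf i).le_add_mul x y)

theorem dist_sum_mul_le_of_sum_eq_one {ι : Type*} [Fintype ι] {w : ι → ℝ}
    (hw0 : ∀ i, 0 ≤ w i) (hw1 : ∑ i, w i = 1) (x y : ι → ℝ) :
    dist (∑ i, w i * x i) (∑ i, w i * y i) ≤ dist x y :=
  calc dist (∑ i, w i * x i) (∑ i, w i * y i) = |∑ i, w i * (x i - y i)| := by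
        simp only [Real.dist_eq, mul_sub, Finset.sum_sub_distrib]
    _ ≤ ∑ i, w i * |x i - y i| := by
        refine (Finset.abs_sum_le_sum_abs _ _).trans_eq ?_
        simp only [abs_mul, abs_of_nonneg (hw0 _)]
    _ ≤ ∑ i, w i * dist x y :=
        Finset.sum_le_sum fun i _ => mul_le_mul_of_nonneg_left (dist_le_pi_dist x y i) (hw0 i)
    _ = dist x y := by rw [← Finset.sum_mul, hw1, one_mul]

theorem lipschitzWith_bellman {S A : ℕ} [NeZero A] {P : Fin S → Fin S → Fin A → ℝ}
    (hP0 : ∀ s' s a, 0 ≤ P s' s a) (hP1 : ∀ s a, ∑ s' : Fin S, P s' s a = 1)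
    {γ : ℝ} (hγ : 0 ≤ γ) (C : Fin S → Fin A → ℝ) :
    LipschitzWith γ.toNNReal (bellman S A P γ C) := by
  have hQ : ∀ s a, LipschitzWith γ.toNNReal
      fun V : Fin S → ℝ => C s a + γ * ∑ s', P s' s a * V s' :=
    fun s a => LipschitzWith.of_dist_le' fun V V' => by
      rw [dist_add_left, Real.dist_eq, ← mul_sub, abs_mul, abs_of_nonneg hγ, ← Real.dist_eq]
      exact mul_le_mul_of_nonneg_left (dist_sum_mul_le_of_sum_eq_one (hP0 · s a) (hP1 s a) V V') hγ
  refine LipschitzWith.of_dist_le' fun V V' => (dist_pi_le_iff (by positivity)).2 fun s => ?_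
  simpa only [bellman, Real.coe_toNNReal γ hγ] using (LipschitzWith.ciInf (hQ s)).dist_le_mul V V'

-- `hK` excludes `t = ∅`, `K = 0`, where the left side is `∞` and the right side `0 * ∞ = 0`.
theorem infEDist_image_le_mul {α β : Type*} [PseudoEMetricSpace α] [PseudoEMetricSpace β]
    {K : ℝ≥0} (hK : K ≠ 0) {f : α → β} (hf : LipschitzWith K f) (x : α) (t : Set α) :
    infEDist (f x) (f '' t) ≤ K * infEDist x t :=
  calc infEDist (f x) (f '' t) ≤ ⨅ y ∈ t, K * edist x y :=
        le_iInf₂ fun y hy => (infEDist_le_edist_of_mem (Set.mem_image_of_mem f hy)).trans (hf x y)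
    _ = K * infEDist x t := by
        simp only [infEDist, ENNReal.mul_iInf_of_ne (ENNReal.coe_ne_zero.2 hK) ENNReal.coe_ne_top]

theorem hausdorffEDist_biUnion_image_le_mul {ι α β : Type*} [PseudoEMetricSpace α]
    [PseudoEMetricSpace β] {K : ℝ≥0} (hK : K ≠ 0) {f : ι → α → β}
    (hf : ∀ i, LipschitzWith K (f i)) (I : Set ι) (s t : Set α) :
    hausdorffEDist (⋃ i ∈ I, f i '' s) (⋃ i ∈ I, f i '' t) ≤ K * hausdorffEDist s t := by
  have hinf : ∀ s t : Set α, ∀ y ∈ ⋃ i ∈ I, f i '' s,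
      infEDist y (⋃ i ∈ I, f i '' t) ≤ K * hausdorffEDist s t := by
    intro s t y hy
    obtain ⟨i, hi, x, hx, rfl⟩ : ∃ i ∈ I, ∃ x ∈ s, f i x = y := by simpa using hy
    calc infEDist (f i x) (⋃ i ∈ I, f i '' t) ≤ infEDist (f i x) (f i '' t) :=
          infEDist_anti (Set.subset_biUnion_of_mem (u := fun i => f i '' t) hi)
      _ ≤ K * infEDist x t := infEDist_image_le_mul hK (hf i) x t
      _ ≤ K * hausdorffEDist s t := by gcongr; exact infEDist_le_hausdorffEDist_of_mem hx
  refine hausdorffEDist_le_of_infEDist (hinf s t) ?_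
  rw [hausdorffEDist_comm]
  exact hinf t s

theorem setBellman_eq_closure_biUnion_image (S A : ℕ) (P : Fin S → Fin S → Fin A → ℝ) (γ : ℝ)
    (𝒞 : Set (Fin S → Fin A → ℝ)) (𝒱 : Set (Fin S → ℝ)) :
    setBellman S A P γ 𝒞 𝒱 = closure (⋃ C ∈ 𝒞, bellman S A P γ C '' 𝒱) := by
  simp only [setBellman, Set.image_eq_iUnion]

theorem setBellman_contraction_general (S A : ℕ) (hA : 0 < A)
    (P : Fin S → Fin S → Fin A → ℝ)
    (hP0 : ∀ s' s a, 0 ≤ P s' s a)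
    (hP1 : ∀ s a, ∑ s' : Fin S, P s' s a = 1)
    (γ : ℝ) (hγ : γ ∈ Set.Ioo (0 : ℝ) 1)
    (𝒞 : Set (Fin S → Fin A → ℝ))
    (𝒱 𝒱' : Set (Fin S → ℝ)) (h𝒱ne : 𝒱.Nonempty) (h𝒱c : IsCompact 𝒱)
    (h𝒱'ne : 𝒱'.Nonempty) (h𝒱'c : IsCompact 𝒱') :
    hausdorffDist (setBellman S A P γ 𝒞 𝒱) (setBellman S A P γ 𝒞 𝒱') ≤
      γ * hausdorffDist 𝒱 𝒱' := by
  obtain ⟨hγ0, -⟩ := hγ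
  have : NeZero A := ⟨hA.ne'⟩
  have h𝒱𝒱' : hausdorffEDist 𝒱 𝒱' ≠ ⊤ :=
    hausdorffEDist_ne_top_of_nonempty_of_bounded h𝒱ne h𝒱'ne h𝒱c.isBounded h𝒱'c.isBounded
  have hbound := ENNReal.toReal_mono (ENNReal.mul_ne_top ENNReal.coe_ne_top h𝒱𝒱')
    (hausdorffEDist_biUnion_image_le_mul (Real.toNNReal_pos.2 hγ0).ne'
      (lipschitzWith_bellman hP0 hP1 hγ0.le) 𝒞 𝒱 𝒱')
  rw [ENNReal.toReal_mul, ENNReal.coe_toReal, Real.coe_toNNReal γ hγ0.le] at hbound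
  rwa [setBellman_eq_closure_biUnion_image, setBellman_eq_closure_biUnion_image,
    hausdorffDist_closure]

theorem setBellman_contraction (S A : ℕ) (hS : 0 < S) (hA : 0 < A)
    (P : Fin S → Fin S → Fin A → ℝ)
    (hP0 : ∀ s' s a, 0 ≤ P s' s a)
    (hP1 : ∀ s a, ∑ s' : Fin S, P s' s a = 1)
    (γ : ℝ) (hγ : γ ∈ Set.Ioo (0 : ℝ) 1)
    (𝒞 : Set (Fin S → Fin A → ℝ)) (h𝒞ne : 𝒞.Nonempty) (h𝒞c : IsCompact 𝒞)
    (𝒱 𝒱' : Set (Fin S → ℝ)) (h𝒱ne : 𝒱.Nonempty) (h𝒱c : IsCompact 𝒱)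
    (h𝒱'ne : 𝒱'.Nonempty) (h𝒱'c : IsCompact 𝒱') :
    hausdorffDist (setBellman S A P γ 𝒞 𝒱) (setBellman S A P γ 𝒞 𝒱') ≤
      γ * hausdorffDist 𝒱 𝒱' :=
  setBellman_contraction_general S A hA P hP0 hP1 γ hγ 𝒞 𝒱 𝒱' h𝒱ne h𝒱c h𝒱'ne h𝒱'c
end

section
/- (product formula used in Lemma 10) Let S be a positive natural number and for each i ∈ Fin S let X_i, Y_i be nonempty compact subsets of ℝ. Let X = {v ∈ ℝ^S : ∀ i, v i ∈ X_i} and Y = {v ∈ ℝ^S : ∀ i, v i ∈ Y_i}, where ℝ^S = (Fin S → ℝ) carries the sup norm. Then the Hausdorff distance satisfies d_H(X, Y) = max_{i ∈ Fin S} d_H(X_i, Y_i). -/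
/-!
The extended distance from a point to a box is the maximum of the coordinatewise distances,
since near-optimal points can be chosen independently in each coordinate (complete
distributivity of `ℝ≥0∞`). Taking the supremum over a box with nonempty sides then also splits
coordinatewise, so the Hausdorff edistance of two boxes is the maximum of the Hausdorff
edistances of their sides. For bounded sides everything is finite, so this passes to `ℝ`.
-/

open Set

variable {ι : Type*} {α : ι → Type*}

theorem iSup_mem_univ_pi_iSup {β : Type*} [CompleteLattice β] {s : ∀ i, Set (α i)}
    (hs : ∀ i, (s i).Nonempty) (f : ∀ i, α i → β) :
    ⨆ x ∈ univ.pi s, ⨆ i, f i (x i) = ⨆ i, ⨆ a ∈ s i, f i a := by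
  classical
  refine le_antisymm
    (iSup₂_le fun x hx => iSup_mono fun i => le_iSup₂ (f := fun a _ => f i a) (x i) (hx i trivial))
    (iSup_le fun i => iSup₂_le fun a ha => ?_)
  obtain ⟨x, hx⟩ := univ_pi_nonempty_iff.2 hs
  exact le_iSup₂_of_le (Function.update x i a) ((update_mem_pi_iff_of_mem hx).2 fun _ => ha)
    (le_iSup_of_le i (by rw [Function.update_self]))

namespace Metric

variable [Fintype ι]

section PseudoEMetricSpace

variable [∀ i, PseudoEMetricSpace (α i)]

theorem infEDist_univ_pi (x : ∀ i, α i) (t : ∀ i, Set (α i)) :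
    infEDist x (univ.pi t) = ⨆ i, infEDist (x i) (t i) := by
  simp only [infEDist, iInf_subtype', edist_pi_def, Finset.sup_univ_eq_iSup, iSup_iInf_eq]
  exact (Equiv.Set.univPi t).iInf_congr fun _ => rfl

theorem hausdorffEDist_univ_pi {s t : ∀ i, Set (α i)} (hs : ∀ i, (s i).Nonempty)
    (ht : ∀ i, (t i).Nonempty) :
    hausdorffEDist (univ.pi s) (univ.pi t) = ⨆ i, hausdorffEDist (s i) (t i) := by
  simp only [hausdorffEDist_def, infEDist_univ_pi]
  rw [iSup_mem_univ_pi_iSup hs fun i a => infEDist a (t i),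
    iSup_mem_univ_pi_iSup ht fun i a => infEDist a (s i), iSup_sup_eq]

end PseudoEMetricSpace

theorem hausdorffDist_univ_pi [∀ i, PseudoMetricSpace (α i)] {s t : ∀ i, Set (α i)}
    (hs : ∀ i, (s i).Nonempty) (ht : ∀ i, (t i).Nonempty)
    (hs' : ∀ i, Bornology.IsBounded (s i)) (ht' : ∀ i, Bornology.IsBounded (t i)) :
    hausdorffDist (univ.pi s) (univ.pi t) = ⨆ i, hausdorffDist (s i) (t i) := by
  rw [hausdorffDist, hausdorffEDist_univ_pi hs ht, ENNReal.toReal_iSup fun i =>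
    hausdorffEDist_ne_top_of_nonempty_of_bounded (hs i) (ht i) (hs' i) (ht' i)]
  rfl

end Metric

open Metric

theorem hausdorffDist_pi_general (S : ℕ)
    (X Y : Fin S → Set ℝ)
    (hXne : ∀ i, (X i).Nonempty) (hXc : ∀ i, IsCompact (X i))
    (hYne : ∀ i, (Y i).Nonempty) (hYc : ∀ i, IsCompact (Y i)) :
    hausdorffDist {v : Fin S → ℝ | ∀ i, v i ∈ X i} {v : Fin S → ℝ | ∀ i, v i ∈ Y i} =
      ⨆ i : Fin S, hausdorffDist (X i) (Y i) := by
  simpa only [Set.pi, mem_univ, true_imp_iff] using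
    hausdorffDist_univ_pi hXne hYne (fun i => (hXc i).isBounded) fun i => (hYc i).isBounded

theorem hausdorffDist_pi (S : ℕ) (hS : 0 < S)
    (X Y : Fin S → Set ℝ)
    (hXne : ∀ i, (X i).Nonempty) (hXc : ∀ i, IsCompact (X i))
    (hYne : ∀ i, (Y i).Nonempty) (hYc : ∀ i, IsCompact (Y i)) :
    hausdorffDist {v : Fin S → ℝ | ∀ i, v i ∈ X i} {v : Fin S → ℝ | ∀ i, v i ∈ Y i} =
      ⨆ i : Fin S, hausdorffDist (X i) (Y i) :=
  hausdorffDist_pi_general S X Y hXne hXc hYne hYc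
end

section
/- (Lemma 10) Let S be a positive natural number and let x̲, x̄, y̲, ȳ ∈ ℝ^S = (Fin S → ℝ) satisfy x̲ ≤ x̄ and y̲ ≤ ȳ componentwise. Let 𝒳 = {x ∈ ℝ^S : x̲ ≤ x ≤ x̄ componentwise} and 𝒴 = {y ∈ ℝ^S : y̲ ≤ y ≤ ȳ componentwise}. Then, with ℝ^S equipped with the sup norm, the Hausdorff distance satisfies d_H(𝒳, 𝒴) = max(‖x̲ − y̲‖∞, ‖x̄ − ȳ‖∞). -/
/-!
Clamping a point of `[xl, xu]` coordinatewise into `[yl, yu]` moves it by at most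
`max ‖xl - yl‖ ‖xu - yu‖`, since a point of `[xl, xu]` is its own clamp into `[xl, xu]` and
clamping is 1-Lipschitz in the bounds; symmetrically for points of `[yl, yu]`. Conversely, if
`xl i < yl i` then the corner `xl` is at distance at least `yl i - xl i` from every point of
`[yl, yu]`, and likewise for the other corners and signs.
-/

open Metric Set

theorem abs_sub_max_min_le {a b c d t : ℝ} (ht : t ∈ Icc a b) :
    |t - max c (min t d)| ≤ max |a - c| |b - d| := by
  have hclamp : max a (min t b) = t := by rw [min_eq_left ht.2, max_eq_right ht.1]
  calc |t - max c (min t d)| = |max a (min t b) - max c (min t d)| := by rw [hclamp]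
    _ ≤ max |a - c| |min t b - min t d| := abs_max_sub_max_le_max _ _ _ _
    _ ≤ max |a - c| |b - d| :=
        max_le_max le_rfl (by simpa using abs_min_sub_min_le_max t b t d)

section Box

variable {ι : Type*} [Fintype ι] {a b c d : ι → ℝ}

theorem dist_sup_inf_le {x : ι → ℝ} (hx : x ∈ Icc a b) :
    dist x (c ⊔ x ⊓ d) ≤ max ‖a - c‖ ‖b - d‖ := by
  refine (dist_pi_le_iff (le_max_of_le_left (norm_nonneg _))).2 fun i => ?_
  rw [Real.dist_eq]
  calc |x i - max (c i) (min (x i) (d i))| ≤ max |a i - c i| |b i - d i| :=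
        abs_sub_max_min_le ⟨hx.1 i, hx.2 i⟩
    _ ≤ max ‖a - c‖ ‖b - d‖ := max_le_max (norm_le_pi_norm (a - c) i) (norm_le_pi_norm (b - d) i)

theorem exists_mem_Icc_dist_le (hcd : c ≤ d) {x : ι → ℝ} (hx : x ∈ Icc a b) :
    ∃ y ∈ Icc c d, dist x y ≤ max ‖a - c‖ ‖b - d‖ :=
  ⟨c ⊔ x ⊓ d, ⟨le_sup_left, sup_le hcd inf_le_right⟩, dist_sup_inf_le hx⟩

theorem hausdorffDist_Icc_le (hab : a ≤ b) (hcd : c ≤ d) :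
    hausdorffDist (Icc a b) (Icc c d) ≤ max ‖a - c‖ ‖b - d‖ := by
  refine hausdorffDist_le_of_mem_dist (le_max_of_le_left (norm_nonneg _))
    (fun x hx => exists_mem_Icc_dist_le hcd hx) fun y hy => ?_
  rw [norm_sub_rev a, norm_sub_rev b]
  exact exists_mem_Icc_dist_le hab hy

theorem max_sub_le_infDist_Icc (hcd : c ≤ d) (p : ι → ℝ) (i : ι) :
    max (c i - p i) (p i - d i) ≤ infDist p (Icc c d) := by
  refine (le_infDist (nonempty_Icc.2 hcd)).2 fun y hy => ?_
  calc max (c i - p i) (p i - d i) ≤ |p i - y i| :=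
        max_le (by linarith [hy.1 i, neg_abs_le (p i - y i)])
          (by linarith [hy.2 i, le_abs_self (p i - y i)])
    _ = dist (p i) (y i) := (Real.dist_eq _ _).symm
    _ ≤ dist p y := dist_le_pi_dist p y i

theorem max_sub_le_hausdorffDist_Icc (hab : a ≤ b) (hcd : c ≤ d) (i : ι) :
    max (c i - a i) (b i - d i) ≤ hausdorffDist (Icc a b) (Icc c d) := by
  have hfin : hausdorffEDist (Icc a b) (Icc c d) ≠ ⊤ :=
    hausdorffEDist_ne_top_of_nonempty_of_bounded (nonempty_Icc.2 hab) (nonempty_Icc.2 hcd)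
      (isBounded_Icc a b) (isBounded_Icc c d)
  have hdist (p) (hp : p ∈ Icc a b) := infDist_le_hausdorffDist_of_mem (t := Icc c d) hp hfin
  exact max_le
    (((le_max_left _ _).trans (max_sub_le_infDist_Icc hcd a i)).trans (hdist a ⟨le_rfl, hab⟩))
    (((le_max_right _ _).trans (max_sub_le_infDist_Icc hcd b i)).trans (hdist b ⟨hab, le_rfl⟩))

theorem max_norm_sub_le_hausdorffDist_Icc (hab : a ≤ b) (hcd : c ≤ d) :
    max ‖a - c‖ ‖b - d‖ ≤ hausdorffDist (Icc a b) (Icc c d) := by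
  have hle (i : ι) : |a i - c i| ≤ hausdorffDist (Icc a b) (Icc c d) ∧
      |b i - d i| ≤ hausdorffDist (Icc a b) (Icc c d) := by
    have h := max_sub_le_hausdorffDist_Icc hab hcd i
    have h' := max_sub_le_hausdorffDist_Icc hcd hab i
    rw [hausdorffDist_comm] at h'
    rw [max_le_iff] at h h'
    exact ⟨abs_sub_le_iff.2 ⟨h'.1, h.1⟩, abs_sub_le_iff.2 ⟨h.2, h'.2⟩⟩
  exact max_le ((pi_norm_le_iff_of_nonneg hausdorffDist_nonneg).2 fun i => (hle i).1)
    ((pi_norm_le_iff_of_nonneg hausdorffDist_nonneg).2 fun i => (hle i).2)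

theorem hausdorffDist_Icc (hab : a ≤ b) (hcd : c ≤ d) :
    hausdorffDist (Icc a b) (Icc c d) = max ‖a - c‖ ‖b - d‖ :=
  le_antisymm (hausdorffDist_Icc_le hab hcd) (max_norm_sub_le_hausdorffDist_Icc hab hcd)

end Box

theorem hausdorffDist_box_general (S : ℕ)
    (xl xu yl yu : Fin S → ℝ) (hx : xl ≤ xu) (hy : yl ≤ yu) :
    hausdorffDist {x : Fin S → ℝ | xl ≤ x ∧ x ≤ xu} {y : Fin S → ℝ | yl ≤ y ∧ y ≤ yu} =
      max ‖xl - yl‖ ‖xu - yu‖ :=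
  hausdorffDist_Icc hx hy

theorem hausdorffDist_box (S : ℕ) (hS : 0 < S)
    (xl xu yl yu : Fin S → ℝ) (hx : xl ≤ xu) (hy : yl ≤ yu) :
    hausdorffDist {x : Fin S → ℝ | xl ≤ x ∧ x ≤ xu} {y : Fin S → ℝ | yl ≤ y ∧ y ≤ yu} =
      max ‖xl - yl‖ ‖xu - yu‖ :=
  hausdorffDist_box_general S xl xu yl yu hx hy
end
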